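/- Let G be a plane graph with positive integral edge weights and girth(G) ≤ B. Partition the nodes of G by outerplane depth, and for each integer i ≥ 0, let G_i be the subgraph induced by nodes with outerplane depth j satisfying B·i < j ≤ B·(i+2). Then girth(G) equals the minimum of girth(G_i) over all i ≥ 0, i.e., some minimum-weight simple cycle of G lies entirely in a single slab G_i. -/

import Mathlib

open SimpleGraph

variable {V : Type*}

/-- The weight of a walk: the sum of the weights of its edges. -/
def walkWeight {G : SimpleGraph V} (w : Sym2 V → ℕ) {u v : V} (p : G.Walk u v) : ℕ :=
  (p.edges.map w).sum

/-- Abstract model of the outerplane-depth function of a plane graph `G`: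
`depth v` is the positive integer such that `v` becomes external after peeling
`depth v - 1` levels of external nodes; peeling exposes the neighbors of external
nodes, so the depths of adjacent nodes differ by at most one. -/
structure OuterplaneDepth (G : SimpleGraph V) where
  depth : V → ℕ
  one_le : ∀ v : V, 1 ≤ depth v
  adj_le : ∀ ⦃u v : V⦄, G.Adj u v → depth u ≤ depth v + 1

/-- The girth of the subgraph of `G` induced by `A`: the minimum weight of a simple
cycle whose support lies in `A` (`⊤` if there is none). -/
noncomputable def girthIn (G : SimpleGraph V) (w : Sym2 V → ℕ) (A : Set V) : ℕ∞ :=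
  sInf {n : ℕ∞ | ∃ (x : V) (p : G.Walk x x),
    p.IsCycle ∧ {a | a ∈ p.support} ⊆ A ∧ n = (walkWeight w p : ℕ∞)}

/-- The girth of `G`. -/
noncomputable def wgirth (G : SimpleGraph V) (w : Sym2 V → ℕ) : ℕ∞ :=
  girthIn G w Set.univ

/- A minimum-weight cycle `C` of `G` has at most `girth(G) ≤ B` edges, since every edge weighs at
least one, so the depths of its nodes lie in a window `[m, m + B]`, `m` the least of them.  Any such
window lies in one slab `(B·i, B·(i+2)]`: choose `i` with `B·i < m ≤ B·(i+1)`.  The girth of the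
slab is therefore at most the weight of `C`, while no slab has smaller girth than `G` itself. -/

lemma length_le_walkWeight {G : SimpleGraph V} {w : Sym2 V → ℕ}
    (hw : ∀ e ∈ G.edgeSet, 1 ≤ w e) {u v : V} (p : G.Walk u v) :
    p.length ≤ walkWeight w p := by
  rw [← p.length_edges, walkWeight, ← List.length_map (f := w)]
  refine List.length_le_sum_of_one_le _ fun n hn => ?_
  obtain ⟨e, he, rfl⟩ := List.mem_map.1 hn
  exact hw e (p.edges_subset_edgeSet he)

lemma girthIn_mono {G : SimpleGraph V} (w : Sym2 V → ℕ) {A A' : Set V} (h : A ⊆ A') :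
    girthIn G w A' ≤ girthIn G w A :=
  sInf_le_sInf fun _ ⟨x, p, hp, hA, hn⟩ => ⟨x, p, hp, hA.trans h, hn⟩

lemma girthIn_le_walkWeight {G : SimpleGraph V} (w : Sym2 V → ℕ) {A : Set V} {x : V}
    {p : G.Walk x x} (hp : p.IsCycle) (hA : {a | a ∈ p.support} ⊆ A) :
    girthIn G w A ≤ walkWeight w p :=
  sInf_le ⟨x, p, hp, hA, rfl⟩

lemma exists_isCycle_walkWeight_eq_wgirth {G : SimpleGraph V} {w : Sym2 V → ℕ}
    (h : wgirth G w ≠ ⊤) :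
    ∃ (x : V) (p : G.Walk x x), p.IsCycle ∧ (walkWeight w p : ℕ∞) = wgirth G w := by
  have hne : {n : ℕ∞ | ∃ (x : V) (p : G.Walk x x),
      p.IsCycle ∧ {a | a ∈ p.support} ⊆ Set.univ ∧ n = (walkWeight w p : ℕ∞)}.Nonempty :=
    Set.nonempty_iff_ne_empty.2 fun he => h (by rw [wgirth, girthIn, he, sInf_empty])
  obtain ⟨x, p, hp, -, hn⟩ := csInf_mem hne
  exact ⟨x, p, hp, hn.symm⟩

lemma Nat.exists_mul_lt_and_add_le_mul {B m : ℕ} (hB : 0 < B) (hm : 0 < m) :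
    ∃ i, B * i < m ∧ m + B ≤ B * (i + 2) := by
  refine ⟨(m - 1) / B, ?_, ?_⟩
  · have := Nat.mul_div_le (m - 1) B
    omega
  · have := Nat.lt_mul_div_succ (m - 1) hB
    rw [Nat.mul_add] at this ⊢
    omega

namespace OuterplaneDepth

variable {G : SimpleGraph V} (D : OuterplaneDepth G)

lemma depth_le_add_length {u v : V} (p : G.Walk u v) : D.depth v ≤ D.depth u + p.length := by
  induction p with
  | nil => simp
  | cons h _ ih =>
    have := D.adj_le h.symm
    rw [Walk.length_cons]
    omega

lemma depth_le_add_length_of_mem_support {x a b : V} (p : G.Walk x x)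
    (ha : a ∈ p.support) (hb : b ∈ p.support) : D.depth b ≤ D.depth a + p.length := by
  classical
  have hb' : b ∈ (p.rotate a ha).support := (p.mem_support_rotate_iff a ha).2 hb
  calc D.depth b ≤ D.depth a + ((p.rotate a ha).takeUntil b hb').length := D.depth_le_add_length _
    _ ≤ D.depth a + p.length := by
      grw [Walk.length_takeUntil_le_length, Walk.length_rotate]

lemma exists_support_subset_slab {B : ℕ} (hB : 0 < B) {x : V} (p : G.Walk x x)
    (hp : p.length ≤ B) :
    ∃ i : ℕ, {a | a ∈ p.support} ⊆ {v : V | B * i < D.depth v ∧ D.depth v ≤ B * (i + 2)} := by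
  classical
  obtain ⟨a, ha, hmin⟩ := p.support.toFinset.exists_min_image D.depth ⟨x, by simp⟩
  rw [List.mem_toFinset] at ha
  obtain ⟨i, hlo, hhi⟩ := Nat.exists_mul_lt_and_add_le_mul hB (D.one_le a)
  refine ⟨i, fun b hb => ?_⟩
  have hab := hmin b (List.mem_toFinset.2 hb)
  have hba := D.depth_le_add_length_of_mem_support p ha hb
  exact ⟨by omega, by omega⟩

end OuterplaneDepth

/-- Let `G` be a plane graph with positive integral edge weights
and `girth(G) ≤ B`.  For `i ≥ 0` let `G_i` be the subgraph induced by the nodes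
whose outerplane depth `j` satisfies `B·i < j ≤ B·(i+2)`.  Then
`girth(G) = min_i girth(G_i)`: some minimum-weight simple cycle of `G` lies entirely
in a single slab `G_i`. -/
theorem wgirth_eq_min_slab {V : Type*} (G : SimpleGraph V) (w : Sym2 V → ℕ)
    (hw : ∀ e ∈ G.edgeSet, 1 ≤ w e)
    (D : OuterplaneDepth G) (B : ℕ) (hB : wgirth G w ≤ (B : ℕ∞)) :
    wgirth G w =
      ⨅ i : ℕ, girthIn G w {v : V | B * i < D.depth v ∧ D.depth v ≤ B * (i + 2)} := by
  refine le_antisymm (le_iInf fun i => girthIn_mono w (Set.subset_univ _)) ?_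
  obtain ⟨x, p, hp, hpw⟩ :=
    exists_isCycle_walkWeight_eq_wgirth (ne_top_of_le_ne_top (ENat.natCast_ne_top B) hB)
  have hlen : p.length ≤ B :=
    (length_le_walkWeight hw p).trans (by exact_mod_cast hpw ▸ hB)
  have hB0 : 0 < B := by linarith [hp.three_le_length]
  obtain ⟨i, hi⟩ := D.exists_support_subset_slab hB0 p hlen
  calc ⨅ i : ℕ, girthIn G w {v : V | B * i < D.depth v ∧ D.depth v ≤ B * (i + 2)}
      ≤ girthIn G w {v : V | B * i < D.depth v ∧ D.depth v ≤ B * (i + 2)} := iInf_le _ i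
    _ ≤ walkWeight w p := girthIn_le_walkWeight w hp hi
    _ = wgirth G w := hpw
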